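/- arXiv:2601.11453 — 7 statements merged into one kernel-verified Lean document; each statement's English description precedes it below -/
import Mathlib

section
/- The matrix W_C satisfies the Lyapunov equation A·W_C + W_C·Aᵀ = −B_in·B_inᵀ. -/
open Matrix

noncomputable section

/-- The (n−1)×n block [I_{n−1} | −𝟙]: identity followed by a last column of all −1's. -/
def A12 (n : ℕ) : Matrix (Fin (n - 1)) (Fin n) ℝ :=
  Matrix.of fun i j => if (j : ℕ) = n - 1 then -1 else if (i : ℕ) = (j : ℕ) then 1 else 0

/-- The n×(n−1) block with (i,j) entry −(n−1)B/M if i = j and B/M otherwise. -/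
def A21 (n : ℕ) (M B : ℝ) : Matrix (Fin n) (Fin (n - 1)) ℝ :=
  Matrix.of fun i j => if (i : ℕ) = (j : ℕ) then -((n : ℝ) - 1) * B / M else B / M

/-- The (2n−1)×(2n−1) state matrix A of the n-GFM network. -/
def Amat (n : ℕ) (M D B : ℝ) :
    Matrix (Fin (n - 1) ⊕ Fin n) (Fin (n - 1) ⊕ Fin n) ℝ :=
  Matrix.fromBlocks 0 (A12 n) (A21 n M B) (-(D / M) • (1 : Matrix (Fin n) (Fin n) ℝ))

/-- The (2n−1)×n input matrix B_in = [0; (1/M)·I_n]. -/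
def Bin (n : ℕ) (M : ℝ) : Matrix (Fin (n - 1) ⊕ Fin n) (Fin n) ℝ :=
  Matrix.of (Sum.elim (fun _ _ => 0) (fun i j => if i = j then 1 / M else 0))

/-- The block-diagonal candidate controllability gramian W_C. -/
def WC (n : ℕ) (M D B : ℝ) :
    Matrix (Fin (n - 1) ⊕ Fin n) (Fin (n - 1) ⊕ Fin n) ℝ :=
  Matrix.fromBlocks
    ((1 / (2 * n * B * D)) • (Matrix.of (fun _ _ => (1 : ℝ)) + 1)) 0 0
    ((1 / (2 * M * D)) • 1)

private lemma sum_ite_val (n : ℕ) (j : Fin n) (a b : ℝ) :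
    (∑ k : Fin (n-1), if (j:ℕ) = (k:ℕ) then a else b)
      = ((n-1 : ℕ) : ℝ) * b + (if (j:ℕ) < n - 1 then a - b else 0) := by
  rcases lt_or_ge (j:ℕ) (n-1) with h | h
  · rw [if_pos h]
    have e : (∑ k : Fin (n-1), if (j:ℕ) = (k:ℕ) then a else b)
        = ∑ k : Fin (n-1), (b + if (⟨j, h⟩ : Fin (n-1)) = k then a - b else 0) := by
      apply Finset.sum_congr rfl; intro k _
      by_cases hk : (j:ℕ) = (k:ℕ)
      · have hk' : (⟨j,h⟩ : Fin (n-1)) = k := Fin.ext hk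
        simp [hk, hk']
      · have hk' : (⟨j,h⟩ : Fin (n-1)) ≠ k := fun e => hk (congrArg Fin.val e)
        simp [hk, hk']
    rw [e, Finset.sum_add_distrib, Finset.sum_const, Finset.sum_ite_eq]
    simp [Finset.card_univ, mul_comm]
  · have : ∀ k : Fin (n-1), ((j:ℕ) = (k:ℕ)) = False := by
      intro k; simp; omega
    simp only [this, if_false, if_neg (not_lt.mpr h), Finset.sum_const,
      Finset.card_univ, Fintype.card_fin, nsmul_eq_mul, add_zero]

private lemma key_sum₁ (n : ℕ) (c a b : ℝ) (j : Fin n) (i : Fin (n-1)) :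
    (∑ x : Fin (n-1), c * (1 + if i = x then 1 else 0) * (if (j:ℕ) = (x:ℕ) then a else b))
      = c * (((((n-1 : ℕ) : ℝ) * b + (if (j:ℕ) < n - 1 then a - b else 0)))
          + (if (j:ℕ) = (i:ℕ) then a else b)) := by
  have e : ∀ x : Fin (n-1), c * (1 + if i = x then 1 else 0) * (if (j:ℕ) = (x:ℕ) then a else b)
      = c * (if (j:ℕ) = (x:ℕ) then a else b)
        + (if i = x then c * (if (j:ℕ) = (x:ℕ) then a else b) else 0) := by
    intro x; by_cases h : i = x <;> by_cases hj : (j:ℕ) = (x:ℕ) <;> simp [h, hj] <;> ring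
  rw [Finset.sum_congr rfl (fun x _ => e x), Finset.sum_add_distrib, ← Finset.mul_sum,
    sum_ite_val n j a b, Finset.sum_ite_eq]
  simp [mul_add]

private lemma key_sum₂ (n : ℕ) (c a b : ℝ) (j : Fin n) (i : Fin (n-1)) :
    (∑ x : Fin (n-1), (if (j:ℕ) = (x:ℕ) then a else b) * (c * (1 + if x = i then 1 else 0)))
      = c * (((((n-1 : ℕ) : ℝ) * b + (if (j:ℕ) < n - 1 then a - b else 0)))
          + (if (j:ℕ) = (i:ℕ) then a else b)) := by
  rw [← key_sum₁ n c a b j i]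
  apply Finset.sum_congr rfl; intro x _
  by_cases hj : (j:ℕ) = (x:ℕ) <;> by_cases h : x = i <;>
    simp [hj, h, eq_comm (a := i) (b := x)] <;> ring

/-- W_C satisfies the Lyapunov equation A·W_C + W_C·Aᵀ = −B_in·B_inᵀ. -/
theorem WC_satisfies_lyapunov (n : ℕ) (hn : 2 ≤ n) (M D B : ℝ)
    (hM : 0 < M) (hD : 0 < D) (hB : 0 < B) :
    Amat n M D B * WC n M D B + WC n M D B * (Amat n M D B)ᵀ =
      -(Bin n M * (Bin n M)ᵀ) := by
  have hM' := hM.ne'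
  have hD' := hD.ne'
  have hB' := hB.ne'
  have hn0 : (n : ℝ) ≠ 0 := by positivity
  have hc : ((n - 1 : ℕ) : ℝ) = (n : ℝ) - 1 := by
    rw [Nat.cast_sub (by omega)]; simp
  ext i j
  rcases i with i | i <;> rcases j with j | j <;>
    simp only [Matrix.add_apply, Matrix.mul_apply, Matrix.neg_apply, Matrix.transpose_apply,
      Fintype.sum_sum_type, Amat, WC, Bin, A12, A21, Matrix.fromBlocks_apply₁₁,
      Matrix.fromBlocks_apply₁₂, Matrix.fromBlocks_apply₂₁, Matrix.fromBlocks_apply₂₂,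
      Matrix.of_apply, Sum.elim_inl, Sum.elim_inr, Matrix.zero_apply, Matrix.smul_apply,
      Matrix.one_apply, Matrix.add_apply, smul_eq_mul]
  · simp
  · -- (inl i, inr j)
    rw [key_sum₁ n (1 / (2 * (n:ℝ) * B * D)) (-((n:ℝ) - 1) * B / M) (B / M) j i, hc]
    simp only [mul_ite, ite_mul, mul_zero, zero_mul, mul_one, Finset.sum_ite_eq',
      Finset.mem_univ, if_true, ite_self, Finset.sum_const_zero, zero_add, add_zero, neg_zero]
    by_cases h1 : (j:ℕ) = n - 1
    · have h2 : ¬ (j:ℕ) < n - 1 := by omega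
      have h3 : ¬ (i:ℕ) = (j:ℕ) := by have := i.isLt; omega
      have h4 : ¬ (j:ℕ) = (i:ℕ) := fun e => h3 e.symm
      simp only [if_pos h1, if_neg h2, if_neg h3, if_neg h4]
      field_simp; ring
    · have hlt : (j:ℕ) < n - 1 := by have := j.isLt; omega
      by_cases h2 : (j:ℕ) = (i:ℕ)
      · have h3 : (i:ℕ) = (j:ℕ) := h2.symm
        simp only [if_neg h1, if_pos hlt, if_pos h2, if_pos h3]
        field_simp; ring
      · have h3 : ¬ (i:ℕ) = (j:ℕ) := fun e => h2 e.symm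
        simp only [if_neg h1, if_pos hlt, if_neg h2, if_neg h3]
        field_simp; ring
  · -- (inr i, inl j)
    rw [key_sum₂ n (1 / (2 * (n:ℝ) * B * D)) (-((n:ℝ) - 1) * B / M) (B / M) i j, hc]
    have hsum : (∑ x : Fin n, (1 / (2 * M * D) * if i = x then 1 else 0) *
          (if (x:ℕ) = n - 1 then (-1:ℝ) else if (j:ℕ) = (x:ℕ) then 1 else 0))
        = 1 / (2 * M * D) *
          (if (i:ℕ) = n - 1 then -1 else if (j:ℕ) = (i:ℕ) then 1 else 0) := by
      have e : ∀ x : Fin n, (1 / (2 * M * D) * if i = x then 1 else 0) *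
          (if (x:ℕ) = n - 1 then (-1:ℝ) else if (j:ℕ) = (x:ℕ) then 1 else 0)
          = if i = x then 1 / (2 * M * D) *
              (if (x:ℕ) = n - 1 then (-1:ℝ) else if (j:ℕ) = (x:ℕ) then 1 else 0) else 0 := by
        intro x; by_cases h : i = x <;> simp [h]
      rw [Finset.sum_congr rfl (fun x _ => e x), Finset.sum_ite_eq]; simp
    rw [hsum]
    simp only [mul_ite, ite_mul, mul_zero, zero_mul, mul_one, Finset.sum_ite_eq,
      Finset.mem_univ, if_true, Finset.sum_const_zero, zero_add, add_zero, neg_zero]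
    by_cases h1 : (i:ℕ) = n - 1
    · have h2 : ¬ (i:ℕ) < n - 1 := by omega
      have h3 : ¬ (j:ℕ) = (i:ℕ) := by have := j.isLt; omega
      have h4 : ¬ (i:ℕ) = (j:ℕ) := fun e => h3 e.symm
      simp only [if_pos h1, if_neg h2, if_neg h3, if_neg h4]
      field_simp; ring
    · have hlt : (i:ℕ) < n - 1 := by have := i.isLt; omega
      by_cases h2 : (i:ℕ) = (j:ℕ)
      · have h3 : (j:ℕ) = (i:ℕ) := h2.symm
        simp only [if_neg h1, if_pos hlt, if_pos h2, if_pos h3]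
        field_simp; ring
      · have h3 : ¬ (j:ℕ) = (i:ℕ) := fun e => h2 e.symm
        simp only [if_neg h1, if_pos hlt, if_neg h2, if_neg h3]
        field_simp; ring
  · -- (inr i, inr j)
    simp only [mul_ite, ite_mul, mul_zero, zero_mul, mul_one, Finset.sum_ite_eq,
      Finset.sum_ite_eq', Finset.mem_univ, if_true, ite_self, Finset.sum_const_zero, zero_add, add_zero]
    by_cases h : i = j
    · simp only [if_pos h, if_pos h.symm]
      field_simp; ring
    · simp [h, fun e : j = i => h e.symm]
end
end

section
/- Every complex eigenvalue z of the matrix A satisfies Re z < 0; that is, A is Hurwitz. -/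
open Matrix

noncomputable section

lemma quad_root_re_neg (d c : ℝ) (hd : 0 < d) (hc : 0 < c) (z : ℂ)
    (h : z ^ 2 + (d : ℂ) * z + (c : ℂ) = 0) : z.re < 0 := by
  by_contra hre
  push_neg at hre
  have him := congrArg Complex.im h
  have hree := congrArg Complex.re h
  simp [Complex.add_im, Complex.add_re, Complex.mul_im, Complex.mul_re, pow_two] at him hree
  have him0 : z.im = 0 := by nlinarith
  nlinarith

lemma charpoly_root_det {m : Type*} [Fintype m] [DecidableEq m] (A : Matrix m m ℂ) (z : ℂ)
    (h : A.charpoly.IsRoot z) : (z • (1 : Matrix m m ℂ) - A).det = 0 := by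
  have h2 : ((Matrix.charmatrix A).map (Polynomial.eval z)).det = 0 := by
    have h2 := h
    rw [Polynomial.IsRoot, Matrix.charpoly, ← Polynomial.coe_evalRingHom,
      RingHom.map_det, RingHom.mapMatrix_apply] at h2
    exact h2
  have h3 : (Matrix.charmatrix A).map (Polynomial.eval z) = z • (1 : Matrix m m ℂ) - A := by
    ext i j
    rw [Matrix.map_apply, Matrix.charmatrix_apply]
    by_cases hij : i = j <;>
      simp [hij, Matrix.one_apply, Matrix.diagonal_apply, Matrix.sub_apply]
  rwa [h3] at h2

/-- Every complex eigenvalue z of A (i.e. every complex root of its characteristic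
polynomial) satisfies Re z < 0: the state matrix A is Hurwitz. -/
theorem Amat_hurwitz (n : ℕ) (hn : 2 ≤ n) (M D B : ℝ)
    (hM : 0 < M) (hD : 0 < D) (hB : 0 < B) :
    ∀ z : ℂ, ((Amat n M D B).map (fun x : ℝ => (x : ℂ))).charpoly.IsRoot z → z.re < 0 := by
  intro z hz
  have hdet := charpoly_root_det ((Amat n M D B).map (fun x : ℝ => (x : ℂ))) z hz
  obtain ⟨v, hv0, hv⟩ := (Matrix.exists_mulVec_eq_zero_iff).mpr hdet
  have hAv : ((Amat n M D B).map (fun x : ℝ => (x : ℂ))) *ᵥ v = z • v := by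
    rw [Matrix.sub_mulVec, sub_eq_zero, Matrix.smul_mulVec, Matrix.one_mulVec] at hv
    exact hv.symm
  -- notation
  have hn1 : n - 1 < n := by omega
  set ℓ : Fin n := ⟨n - 1, hn1⟩ with hℓdef
  have he : ∀ i : Fin (n - 1), (i : ℕ) < n := fun i => lt_trans i.isLt hn1
  set e : Fin (n - 1) → Fin n := fun i => ⟨(i : ℕ), he i⟩ with hedef
  set d : ℂ := ((D / M : ℝ) : ℂ) with hddef
  set b : ℂ := ((B / M : ℝ) : ℂ) with hbdef
  -- row equations
  have h1 : ∀ i : Fin (n - 1),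
      (∑ j : Fin n, ((A12 n i j : ℝ) : ℂ) * v (Sum.inr j)) = z * v (Sum.inl i) := by
    intro i
    have h := congrFun hAv (Sum.inl i)
    simpa [Matrix.mulVec, dotProduct, Fintype.sum_sum_type, Amat,
      Matrix.map_apply] using h
  have h2 : ∀ i : Fin n,
      (∑ j : Fin (n - 1), ((A21 n M B i j : ℝ) : ℂ) * v (Sum.inl j)) - d * v (Sum.inr i)
        = z * v (Sum.inr i) := by
    intro i
    have h := congrFun hAv (Sum.inr i)
    simp [Matrix.mulVec, dotProduct, Fintype.sum_sum_type, Amat,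
      Matrix.map_apply, Matrix.smul_apply, Matrix.one_apply, mul_ite,
      apply_ite (fun x : ℝ => (x : ℂ)), ite_mul, zero_mul,
      Finset.sum_ite_eq, hddef] at h
    rw [hddef]
    push_cast at h ⊢
    linear_combination h
  -- evaluate the A12 sums
  have sum1 : ∀ i : Fin (n - 1),
      (∑ j : Fin n, ((A12 n i j : ℝ) : ℂ) * v (Sum.inr j))
        = v (Sum.inr (e i)) - v (Sum.inr ℓ) := by
    intro i
    have hterm : ∀ j : Fin n, ((A12 n i j : ℝ) : ℂ) * v (Sum.inr j)
        = (if ℓ = j then -v (Sum.inr j) else 0) + (if e i = j then v (Sum.inr j) else 0) := by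
      intro j
      have hi := i.isLt
      simp only [A12, Matrix.of_apply]
      by_cases hj : (j : ℕ) = n - 1
      · have hℓj : ℓ = j := Fin.ext (by simpa [hℓdef] using hj.symm)
        have hej : ¬ e i = j := by
          intro hh
          have := congrArg Fin.val hh
          simp [hedef] at this
          omega
        simp [hj, hℓj, hej]
      · have hℓj : ¬ ℓ = j := by
          intro hh
          have := congrArg Fin.val hh
          simp [hℓdef] at this
          omega
        by_cases hij : (i : ℕ) = (j : ℕ)
        · have hej : e i = j := Fin.ext (by simpa [hedef] using hij)
          simp [hj, hij, hℓj, hej]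
        · have hej : ¬ e i = j := by
            intro hh
            have := congrArg Fin.val hh
            simp [hedef] at this
            omega
          simp [hj, hij, hℓj, hej]
    calc (∑ j : Fin n, ((A12 n i j : ℝ) : ℂ) * v (Sum.inr j))
        = ∑ j : Fin n, ((if ℓ = j then -v (Sum.inr j) else 0)
            + (if e i = j then v (Sum.inr j) else 0)) := by
          exact Finset.sum_congr rfl fun j _ => hterm j
      _ = v (Sum.inr (e i)) - v (Sum.inr ℓ) := by
          rw [Finset.sum_add_distrib, Finset.sum_ite_eq, Finset.sum_ite_eq]
          simp; ring
  have hC : ∀ i : Fin (n - 1),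
      v (Sum.inr (e i)) - v (Sum.inr ℓ) = z * v (Sum.inl i) := by
    intro i; rw [← sum1 i]; exact h1 i
  -- evaluate the A21 sums
  have sumA : ∀ i : Fin (n - 1),
      (∑ j : Fin (n - 1), ((A21 n M B (e i) j : ℝ) : ℂ) * v (Sum.inl j))
        = b * (∑ j : Fin (n - 1), v (Sum.inl j)) - (n : ℂ) * b * v (Sum.inl i) := by
    intro i
    have hterm : ∀ j : Fin (n - 1), ((A21 n M B (e i) j : ℝ) : ℂ) * v (Sum.inl j)
        = b * v (Sum.inl j) + (if i = j then -((n : ℂ) * b * v (Sum.inl j)) else 0) := by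
      intro j
      simp only [A21, Matrix.of_apply]
      by_cases hij : (i : ℕ) = (j : ℕ)
      · have hij' : i = j := Fin.ext hij
        have : ((e i : Fin n) : ℕ) = (j : ℕ) := by simp [hedef, hij]
        rw [if_pos this]
        simp only [if_true, hij', hbdef, eq_self_iff_true]
        push_cast
        ring
      · have : ¬ ((e i : Fin n) : ℕ) = (j : ℕ) := by simp [hedef, hij]
        have hij' : ¬ i = j := fun hh => hij (congrArg Fin.val hh)
        simp only [this, if_false, hij', hbdef]
        ring
    calc (∑ j : Fin (n - 1), ((A21 n M B (e i) j : ℝ) : ℂ) * v (Sum.inl j))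
        = ∑ j : Fin (n - 1), (b * v (Sum.inl j)
            + (if i = j then -((n : ℂ) * b * v (Sum.inl j)) else 0)) :=
          Finset.sum_congr rfl fun j _ => hterm j
      _ = _ := by
          rw [Finset.sum_add_distrib, Finset.sum_ite_eq, ← Finset.mul_sum]
          simp; ring
  have sumB : (∑ j : Fin (n - 1), ((A21 n M B ℓ j : ℝ) : ℂ) * v (Sum.inl j))
      = b * (∑ j : Fin (n - 1), v (Sum.inl j)) := by
    have hterm : ∀ j : Fin (n - 1), ((A21 n M B ℓ j : ℝ) : ℂ) * v (Sum.inl j)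
        = b * v (Sum.inl j) := by
      intro j
      have hj := j.isLt
      have : ¬ ((ℓ : Fin n) : ℕ) = (j : ℕ) := by simp [hℓdef]; omega
      simp only [A21, Matrix.of_apply, this, if_false, hbdef]
    rw [Finset.sum_congr rfl fun j _ => hterm j, ← Finset.mul_sum]
  have eqA : ∀ i : Fin (n - 1),
      b * (∑ j : Fin (n - 1), v (Sum.inl j)) - (n : ℂ) * b * v (Sum.inl i)
        - d * v (Sum.inr (e i)) = z * v (Sum.inr (e i)) := by
    intro i
    have := h2 (e i)
    rwa [sumA i] at this
  have eqB : b * (∑ j : Fin (n - 1), v (Sum.inl j)) - d * v (Sum.inr ℓ)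
      = z * v (Sum.inr ℓ) := by
    have := h2 ℓ
    rwa [sumB] at this
  have key : ∀ i : Fin (n - 1), (z ^ 2 + d * z + (n : ℂ) * b) * v (Sum.inl i) = 0 := by
    intro i
    linear_combination eqB - eqA i - (z + d) * hC i
  by_cases hx : ∀ i : Fin (n - 1), v (Sum.inl i) = 0
  · -- all angle differences vanish
    have hS : (∑ j : Fin (n - 1), v (Sum.inl j)) = 0 :=
      Finset.sum_eq_zero fun j _ => hx j
    have hyeq : ∀ i : Fin (n - 1), v (Sum.inr (e i)) = v (Sum.inr ℓ) := by
      intro i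
      have := hC i
      rw [hx i, mul_zero, sub_eq_zero] at this
      exact this
    have hyℓ : v (Sum.inr ℓ) ≠ 0 := by
      obtain ⟨s, hs⟩ := Function.ne_iff.mp hv0
      simp only [Pi.zero_apply] at hs
      cases s with
      | inl i => exact absurd (hx i) hs
      | inr j =>
        by_cases hj : (j : ℕ) < n - 1
        · have : j = e ⟨(j : ℕ), hj⟩ := Fin.ext rfl
          rw [this, hyeq] at hs
          exact hs
        · have : j = ℓ := Fin.ext (by simp [hℓdef]; omega)
          rwa [this] at hs
    have hzd : (z + d) * v (Sum.inr ℓ) = 0 := by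
      linear_combination b * hS - eqB
    have hz' : z = -d := by
      rcases mul_eq_zero.mp hzd with h | h
      · exact eq_neg_of_add_eq_zero_left h
      · exact absurd h hyℓ
    rw [hz', hddef]
    simp [Complex.neg_re, Complex.ofReal_re]
    positivity
  · push_neg at hx
    obtain ⟨i, hxi⟩ := hx
    have hq : z ^ 2 + d * z + (n : ℂ) * b = 0 := by
      rcases mul_eq_zero.mp (key i) with h | h
      · exact h
      · exact absurd h hxi
    apply quad_root_re_neg (D / M) ((n : ℝ) * (B / M)) (by positivity) (by positivity) z
    rw [hddef, hbdef] at hq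
    push_cast at hq ⊢
    linear_combination hq
end
end

section
/- If W is any real (2n−1)×(2n−1) matrix satisfying the Lyapunov equation A·W + W·Aᵀ = −B_in·B_inᵀ, then W = W_C; i.e., W_C is the unique solution of the Lyapunov equation and hence is the controllability gramian of the pair (A, B_in). -/
open Matrix

noncomputable section

section Aux

def lastF (n : ℕ) (hn : 2 ≤ n) : Fin n := ⟨n - 1, by omega⟩

def emb (n : ℕ) (hn : 2 ≤ n) (i : Fin (n - 1)) : Fin n := ⟨i, by omega⟩

def Jn (n : ℕ) : Matrix (Fin n) (Fin n) ℝ := Matrix.of fun _ _ => 1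
def Jm (n : ℕ) : Matrix (Fin (n-1)) (Fin (n-1)) ℝ := Matrix.of fun _ _ => 1

lemma emb_ne_last (n : ℕ) (hn : 2 ≤ n) (i : Fin (n-1)) : emb n hn i ≠ lastF n hn := by
  simp only [emb, lastF, Fin.ext_iff]
  exact Fin.ne_of_val_ne (Nat.ne_of_lt i.2)


lemma A12_apply (n : ℕ) (hn : 2 ≤ n) (i : Fin (n-1)) (k : Fin n) :
    A12 n i k = (if k = lastF n hn then (-1:ℝ) else 0) + (if k = emb n hn i then 1 else 0) := by
  have hi : (i : ℕ) < n - 1 := i.2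
  simp only [A12, Matrix.of_apply, lastF, emb, Fin.ext_iff]
  rcases eq_or_ne (k:ℕ) (n-1) with h | h
  · simp [h]; omega
  · simp [h, eq_comm]

lemma A21_apply (n : ℕ) (M B : ℝ) (hn : 2 ≤ n) (k : Fin n) (j : Fin (n-1)) :
    A21 n M B k j = B / M + (if k = emb n hn j then -(n:ℝ) * B / M else 0) := by
  simp only [A21, Matrix.of_apply, emb, Fin.ext_iff]
  rcases eq_or_ne (k:ℕ) (j:ℕ) with h | h
  · simp [h]; ring
  · simp [h]

lemma A12_mul_A21 (n : ℕ) (M B : ℝ) (hn : 2 ≤ n) : A12 n * A21 n M B = (-((n:ℝ) * B / M)) • 1 := by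
  ext i j
  rw [Matrix.mul_apply]
  simp only [A12_apply n hn, add_mul, ite_mul, zero_mul, one_mul, neg_one_mul]
  rw [Finset.sum_add_distrib, Finset.sum_ite_eq' _ (lastF n hn), Finset.sum_ite_eq' _ (emb n hn i)]
  simp only [Finset.mem_univ, if_true]
  rw [A21_apply n M B hn (lastF n hn) j, A21_apply n M B hn (emb n hn i) j]
  have h1 : lastF n hn ≠ emb n hn j := (emb_ne_last n hn j).symm
  rw [if_neg h1]
  have h2 : (emb n hn i = emb n hn j) ↔ i = j := by
    constructor
    · intro h; exact Fin.ext (by simpa [emb, Fin.ext_iff] using h)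
    · intro h; rw [h]
  by_cases hij : i = j
  · subst hij
    rw [if_pos rfl]
    simp [Matrix.smul_apply, Matrix.one_apply]
    ring
  · rw [if_neg (by simpa [h2] using hij)]
    simp [Matrix.smul_apply, Matrix.one_apply, hij]


lemma emb_inj (n : ℕ) (hn : 2 ≤ n) (i j : Fin (n-1)) : emb n hn i = emb n hn j ↔ i = j := by
  constructor
  · intro h; exact Fin.ext (by simpa [emb, Fin.ext_iff] using h)
  · intro h; rw [h]

lemma fin_cases' (n : ℕ) (hn : 2 ≤ n) (k : Fin n) :
    k = lastF n hn ∨ ∃ k' : Fin (n-1), k = emb n hn k' := by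
  rcases eq_or_ne (k : ℕ) (n-1) with h | h
  · exact Or.inl (Fin.ext h)
  · refine Or.inr ⟨⟨k, ?_⟩, Fin.ext rfl⟩
    have := k.2; omega

lemma sum_indicator_emb (n : ℕ) (hn : 2 ≤ n) (c : ℝ) (i : Fin n) :
    ∑ k : Fin (n-1), (if i = emb n hn k then c else 0)
      = if i = lastF n hn then 0 else c := by
  rcases fin_cases' n hn i with h | ⟨i', rfl⟩
  · subst h
    rw [if_pos rfl]
    apply Finset.sum_eq_zero
    intro k _
    rw [if_neg (Ne.symm (emb_ne_last n hn k))]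
  · rw [if_neg (emb_ne_last n hn i')]
    have : ∀ k : Fin (n-1), (if emb n hn i' = emb n hn k then c else 0)
        = if k = i' then c else 0 := by
      intro k
      simp only [emb_inj n hn, eq_comm]
    simp_rw [this]
    rw [Finset.sum_ite_eq' _ i']
    simp

lemma A21_rowsum (n : ℕ) (M B : ℝ) (hn : 2 ≤ n) (i : Fin n) :
    ∑ k : Fin (n-1), A21 n M B i k
      = ((n:ℝ)-1) * (B/M) + (if i = lastF n hn then 0 else -(n:ℝ) * B / M) := by
  simp_rw [A21_apply n M B hn i]
  rw [Finset.sum_add_distrib, sum_indicator_emb n hn, Finset.sum_const,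
    Finset.card_univ, Fintype.card_fin]
  have hc : ((n-1:ℕ):ℝ) = (n:ℝ) - 1 := by
    have : (1:ℕ) ≤ n := by omega
    push_cast [Nat.cast_sub this]
    ring
  rw [nsmul_eq_mul, hc]

lemma A12_apply_last (n : ℕ) (hn : 2 ≤ n) (k : Fin (n-1)) :
    A12 n k (lastF n hn) = -1 := by
  simp [A12, lastF]

lemma A12_apply_emb (n : ℕ) (hn : 2 ≤ n) (k j : Fin (n-1)) :
    A12 n k (emb n hn j) = if k = j then 1 else 0 := by
  have hj : (j : ℕ) < n - 1 := j.2
  simp only [A12, Matrix.of_apply, emb]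
  rw [if_neg (by simpa using Nat.ne_of_lt hj)]
  simp [Fin.ext_iff]

lemma A21_mul_A12 (n : ℕ) (M B : ℝ) (hn : 2 ≤ n) :
    A21 n M B * A12 n = (B/M) • Jn n - ((n:ℝ)*B/M) • 1 := by
  ext i j
  rw [Matrix.mul_apply]
  rcases fin_cases' n hn j with h | ⟨j', rfl⟩
  · subst h
    simp_rw [A12_apply_last n hn, mul_neg_one]
    rw [Finset.sum_neg_distrib, A21_rowsum n M B hn i]
    simp only [Matrix.sub_apply, Matrix.smul_apply, Jn, Matrix.of_apply,
      Matrix.one_apply, smul_eq_mul]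
    by_cases hi : i = lastF n hn
    · rw [if_pos hi, if_pos hi]
      ring
    · rw [if_neg hi, if_neg hi]
      ring
  · simp_rw [A12_apply_emb n hn, mul_ite, mul_one, mul_zero]
    rw [Finset.sum_ite_eq' _ j']
    simp only [Finset.mem_univ, if_true]
    rw [A21_apply n M B hn i j']
    simp only [Matrix.sub_apply, Matrix.smul_apply, Jn, Matrix.of_apply,
      Matrix.one_apply, smul_eq_mul]
    by_cases h : i = emb n hn j'
    · rw [if_pos h, if_pos h]; ring
    · rw [if_neg h, if_neg h]; ring

lemma A21_colsum (n : ℕ) (M B : ℝ) (hn : 2 ≤ n) (j : Fin (n-1)) :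
    ∑ k : Fin n, A21 n M B k j = 0 := by
  simp_rw [A21_apply n M B hn _ j]
  rw [Finset.sum_add_distrib, Finset.sum_ite_eq' _ (emb n hn j), Finset.sum_const,
    Finset.card_univ, Fintype.card_fin]
  simp only [Finset.mem_univ, if_true, nsmul_eq_mul]
  ring

lemma Jn_mul_A21 (n : ℕ) (M B : ℝ) (hn : 2 ≤ n) : Jn n * A21 n M B = 0 := by
  ext i j
  rw [Matrix.mul_apply]
  simp only [Jn, Matrix.of_apply, one_mul]
  rw [A21_colsum n M B hn j]
  simp

lemma A21_mul_JmI (n : ℕ) (M B : ℝ) (hn : 2 ≤ n) :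
    A21 n M B * (Jm n + 1) = (-((n:ℝ)*B/M)) • (A12 n)ᵀ := by
  ext i j
  rw [Matrix.mul_apply]
  have expand : ∀ k : Fin (n-1), A21 n M B i k * (Jm n + 1) k j
      = A21 n M B i k + A21 n M B i k * (if k = j then 1 else 0) := by
    intro k
    simp only [Jm, Matrix.add_apply, Matrix.of_apply, Matrix.one_apply]
    by_cases h : k = j <;> simp [h] <;> ring
  simp_rw [expand, mul_ite, mul_one, mul_zero]
  rw [Finset.sum_add_distrib, Finset.sum_ite_eq' _ j, A21_rowsum n M B hn i]
  simp only [Finset.mem_univ, if_true]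
  rw [A21_apply n M B hn i j]
  simp only [Matrix.smul_apply, Matrix.transpose_apply, A12_apply n hn j i,
    smul_eq_mul]
  by_cases hi : i = lastF n hn
  · have h3 : i ≠ emb n hn j := by rw [hi]; exact (emb_ne_last n hn j).symm
    simp only [if_pos hi, if_neg h3]; ring
  · by_cases h2 : i = emb n hn j
    · simp only [if_neg hi, if_pos h2]; ring
    · simp only [if_neg hi, if_neg h2]; ring




lemma Bin_mul_Bin (n : ℕ) (M : ℝ) :
    Bin n M * (Bin n M)ᵀ
      = Matrix.fromBlocks 0 0 0 ((1/(M*M)) • (1 : Matrix (Fin n) (Fin n) ℝ)) := by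
  ext i j
  rw [Matrix.mul_apply]
  rcases i with i | i <;> rcases j with j | j <;>
    simp [Bin, Matrix.fromBlocks, Matrix.one_apply, ite_and, Finset.sum_ite_eq,
      eq_comm, mul_comm] <;>
    by_cases h : i = j <;> simp [h] <;> ring

lemma JmI_mul_A21T (n : ℕ) (M B : ℝ) (hn : 2 ≤ n) :
    (Jm n + 1) * (A21 n M B)ᵀ = (-((n:ℝ)*B/M)) • (A12 n) := by
  have h := congrArg Matrix.transpose (A21_mul_JmI n M B hn)
  have hJ : (Jm n)ᵀ = Jm n := rfl
  simpa [Matrix.transpose_mul, Matrix.transpose_add, Matrix.transpose_smul, hJ] using h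

lemma WC_solves (n : ℕ) (hn : 2 ≤ n) (M D B : ℝ)
    (hM : M ≠ 0) (hD : D ≠ 0) (hB : B ≠ 0) :
    Amat n M D B * WC n M D B + WC n M D B * (Amat n M D B)ᵀ
      = -(Bin n M * (Bin n M)ᵀ) := by
  have hWCb : WC n M D B = Matrix.fromBlocks
      ((1 / (2 * n * B * D)) • (Jm n + 1)) 0 0
      ((1 / (2 * M * D)) • (1 : Matrix (Fin n) (Fin n) ℝ)) := rfl
  rw [Amat, hWCb, Bin_mul_Bin, Matrix.fromBlocks_transpose,
    Matrix.fromBlocks_multiply, Matrix.fromBlocks_multiply, Matrix.fromBlocks_add]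
  simp only [A21_mul_JmI n M B hn, Matrix.smul_mul, smul_zero, Matrix.zero_mul, Matrix.mul_zero, zero_add, add_zero,
    Matrix.transpose_zero, smul_mul_assoc, Matrix.mul_smul, Matrix.transpose_smul,
    Matrix.transpose_neg, Matrix.transpose_one, Matrix.mul_one, Matrix.one_mul,
    Matrix.fromBlocks_neg, neg_zero, neg_smul, smul_smul, smul_neg,
    JmI_mul_A21T n M B hn]
  have hn0 : ((n:ℝ)) ≠ 0 := Nat.cast_ne_zero.mpr (by omega)
  have hs : 1/(2*(n:ℝ)*B*D) * ((n:ℝ)*B/M) = 1/(2*M*D) := by field_simp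
  have hb : 1/(2*M*D)*(D/M) + 1/(2*M*D)*(D/M) = 1/(M*M) := by field_simp; ring
  rw [hs, add_neg_cancel, neg_add_cancel, ← neg_add, ← add_smul, hb]

lemma Amat_CH (n : ℕ) (hn : 2 ≤ n) (M D B : ℝ) (hM : M ≠ 0) :
    (Amat n M D B * Amat n M D B + (D/M) • Amat n M D B + ((n:ℝ)*B/M) • 1)
      * (Amat n M D B + (D/M) • 1) = 0 := by
  rw [show (1 : Matrix (Fin (n-1) ⊕ Fin n) (Fin (n-1) ⊕ Fin n) ℝ)
      = Matrix.fromBlocks 1 0 0 1 from (Matrix.fromBlocks_one).symm]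
  rw [Amat]
  simp only [Matrix.fromBlocks_multiply, Matrix.fromBlocks_add, Matrix.fromBlocks_smul,
    smul_zero, Matrix.zero_mul, Matrix.mul_zero, zero_add, add_zero,
    Matrix.smul_mul, Matrix.mul_smul, Matrix.one_mul, Matrix.mul_one,
    smul_smul, neg_smul, smul_neg, A12_mul_A21 n M B hn, A21_mul_A12 n M B hn,
    Matrix.mul_neg, Matrix.neg_mul, neg_neg, neg_add_cancel, add_neg_cancel,
    Matrix.add_mul, Matrix.sub_mul, Jn_mul_A21 n M B hn]
  rw [show (0 - ((n:ℝ) * B / M) • A21 n M B + (D / M * (D / M)) • A21 n M B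
      + -((D / M * (D / M)) • A21 n M B) + ((n:ℝ) * B / M) • A21 n M B)
      = 0 from by abel, Matrix.fromBlocks_zero]

lemma A12_rowsum (n : ℕ) (hn : 2 ≤ n) (i : Fin (n-1)) :
    ∑ k : Fin n, A12 n i k = 0 := by
  simp_rw [A12_apply n hn i]
  rw [Finset.sum_add_distrib, Finset.sum_ite_eq' _ (lastF n hn),
    Finset.sum_ite_eq' _ (emb n hn i)]
  simp

lemma A12_mul_Jn (n : ℕ) (hn : 2 ≤ n) : A12 n * Jn n = 0 := by
  ext i j
  rw [Matrix.mul_apply]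
  simp only [Jn, Matrix.of_apply, mul_one]
  rw [A12_rowsum n hn i]
  simp

lemma Jn_mul_Jn (n : ℕ) : Jn n * Jn n = (n:ℝ) • Jn n := by
  ext i j
  rw [Matrix.mul_apply]
  simp [Jn, Finset.card_univ]

lemma F1_mul_E1 (n : ℕ) (hn : 2 ≤ n) (M D B : ℝ) (hM : 0 < M) (hD : 0 < D) (hB : 0 < B) :
    ((D/M) • 1 - Amat n M D B) *
      Matrix.fromBlocks
        ((2*(D/M)/(2*(D/M)^2+(n:ℝ)*B/M)) • 1)
        ((1/(2*(D/M)^2+(n:ℝ)*B/M)) • A12 n)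
        ((1/(2*(D/M)^2+(n:ℝ)*B/M)) • A21 n M B)
        (((D/M)/(2*(D/M)^2+(n:ℝ)*B/M)) • 1 + ((B/M)/(2*(D/M)*(2*(D/M)^2+(n:ℝ)*B/M))) • Jn n)
      = 1 := by
  have hσ : 0 < 2*(D/M)^2+(n:ℝ)*B/M := by
    have : (0:ℝ) < (n:ℝ) := by exact_mod_cast (show 0 < n by omega)
    positivity
  rw [show (1 : Matrix (Fin (n-1) ⊕ Fin n) (Fin (n-1) ⊕ Fin n) ℝ)
      = Matrix.fromBlocks 1 0 0 1 from (Matrix.fromBlocks_one).symm]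
  rw [Amat, sub_eq_add_neg, Matrix.fromBlocks_neg, Matrix.fromBlocks_smul,
    Matrix.fromBlocks_add, Matrix.fromBlocks_multiply]
  simp only [smul_zero, neg_zero, add_zero, zero_add, Matrix.zero_mul, Matrix.mul_zero,
    Matrix.smul_mul, Matrix.mul_smul, Matrix.one_mul, Matrix.mul_one,
    Matrix.neg_mul, Matrix.mul_neg, neg_neg, smul_smul, neg_smul, smul_neg,
    Matrix.add_mul, Matrix.mul_add, smul_add,
    A12_mul_A21 n M B hn, A21_mul_A12 n M B hn, A12_mul_Jn n hn, Jn_mul_A21 n M B hn,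
    Jn_mul_Jn n]
  rw [Matrix.fromBlocks_inj]
  have hn0 : ((n:ℝ)) ≠ 0 := Nat.cast_ne_zero.mpr (by omega)
  have hσ' : (2*(D/M)^2+(n:ℝ)*B/M) ≠ 0 := ne_of_gt hσ
  refine ⟨?_, ?_, ?_, ?_⟩
  · ext i j
    simp only [Matrix.add_apply, Matrix.smul_apply, Matrix.one_apply, smul_eq_mul,
      mul_ite, mul_one, mul_zero]
    by_cases h : i = j
    · simp only [if_pos h]
      field_simp
    · simp only [if_neg h]
      ring
  · ext i j
    simp only [Matrix.add_apply, Matrix.neg_apply, Matrix.smul_apply,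
      Matrix.zero_apply, smul_eq_mul]
    ring
  · ext i j
    simp only [Matrix.add_apply, Matrix.neg_apply, Matrix.smul_apply,
      Matrix.zero_apply, smul_eq_mul]
    ring
  · ext i j
    simp only [Matrix.add_apply, Matrix.neg_apply, Matrix.smul_apply, Matrix.sub_apply,
      Matrix.one_apply, Jn, Matrix.of_apply, smul_eq_mul, mul_ite, mul_one, mul_zero]
    by_cases h : i = j
    · simp only [if_pos h]
      field_simp
      ring
    · simp only [if_neg h]
      field_simp
      ring

set_option maxHeartbeats 1000000 in
lemma F2_mul_E2 (n : ℕ) (hn : 2 ≤ n) (M D B : ℝ) (hM : 0 < M) (hD : 0 < D) (hB : 0 < B) :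
    (Amat n M D B * Amat n M D B - (D/M) • Amat n M D B + ((n:ℝ)*B/M) • 1) *
      Matrix.fromBlocks
        ((1/(2*((n:ℝ)*B/M))) • 1)
        ((1/(2*(D/M)*((n:ℝ)*B/M))) • A12 n)
        ((1/(2*(D/M)*((n:ℝ)*B/M))) • A21 n M B)
        (((B/M)/(((n:ℝ)*B/M)*(((n:ℝ)*B/M)+2*(D/M)^2))) • Jn n)
      = 1 := by
  have hnpos : (0:ℝ) < (n:ℝ) := by exact_mod_cast (show 0 < n by omega)
  have hn0 : ((n:ℝ)) ≠ 0 := ne_of_gt hnpos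
  have hc : (0:ℝ) < (n:ℝ)*B/M := by positivity
  have hτ : (0:ℝ) < ((n:ℝ)*B/M)+2*(D/M)^2 := by positivity
  have hc' := ne_of_gt hc
  have hτ' := ne_of_gt hτ
  rw [show (1 : Matrix (Fin (n-1) ⊕ Fin n) (Fin (n-1) ⊕ Fin n) ℝ)
      = Matrix.fromBlocks 1 0 0 1 from (Matrix.fromBlocks_one).symm]
  rw [Amat, sub_eq_add_neg]
  simp only [Matrix.fromBlocks_multiply, Matrix.fromBlocks_smul, Matrix.fromBlocks_neg,
    Matrix.fromBlocks_add]
  simp only [smul_zero, neg_zero, add_zero, zero_add, Matrix.zero_mul, Matrix.mul_zero,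
    Matrix.smul_mul, Matrix.mul_smul, Matrix.one_mul, Matrix.mul_one,
    Matrix.neg_mul, Matrix.mul_neg, neg_neg, smul_smul, neg_smul, smul_neg,
    Matrix.add_mul, Matrix.mul_add, smul_add, Matrix.sub_mul,
    A12_mul_A21 n M B hn, A21_mul_A12 n M B hn, A12_mul_Jn n hn, Jn_mul_A21 n M B hn,
    Jn_mul_Jn n]
  rw [Matrix.fromBlocks_inj]
  refine ⟨?_, ?_, ?_, ?_⟩
  · ext i j
    simp only [Matrix.add_apply, Matrix.neg_apply, Matrix.smul_apply, Matrix.one_apply,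
      Matrix.zero_apply, smul_eq_mul, mul_ite, mul_one, mul_zero]
    by_cases h : i = j
    · simp only [if_pos h]
      field_simp
      ring
    · simp only [if_neg h]
      ring
  · ext i j
    simp only [Matrix.add_apply, Matrix.neg_apply, Matrix.smul_apply,
      Matrix.zero_apply, smul_eq_mul]
    ring
  · ext i j
    simp only [Matrix.add_apply, Matrix.neg_apply, Matrix.smul_apply,
      Matrix.zero_apply, Matrix.sub_apply, smul_eq_mul]
    field_simp
    ring
  · ext i j
    simp only [Matrix.add_apply, Matrix.neg_apply, Matrix.smul_apply, Matrix.sub_apply,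
      Matrix.one_apply, Matrix.zero_apply, Jn, Matrix.of_apply, smul_eq_mul,
      mul_ite, mul_one, mul_zero]
    by_cases h : i = j
    · simp only [if_pos h]
      field_simp
      ring
    · simp only [if_neg h]
      field_simp
      ring

lemma homogeneous_zero (n : ℕ) (hn : 2 ≤ n) (M D B : ℝ)
    (hM : 0 < M) (hD : 0 < D) (hB : 0 < B)
    (X : Matrix (Fin (n-1) ⊕ Fin n) (Fin (n-1) ⊕ Fin n) ℝ)
    (hX : Amat n M D B * X + X * (Amat n M D B)ᵀ = 0) : X = 0 := by
  have hF1E1 := F1_mul_E1 n hn M D B hM hD hB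
  have hF2E2 := F2_mul_E2 n hn M D B hM hD hB
  have hCH := Amat_CH n hn M D B (ne_of_gt hM)
  set C := Amat n M D B with hCdef
  obtain ⟨E1, hE1⟩ : ∃ E, ((D/M) • 1 - C) * E = 1 := ⟨_, hF1E1⟩
  obtain ⟨E2, hE2⟩ : ∃ E, (C*C - (D/M) • C + ((n:ℝ)*B/M) • 1) * E = 1 := ⟨_, hF2E2⟩
  have h1 : X * Cᵀ = -(C * X) := by
    have h := hX
    have : X * Cᵀ = -(C * X) + (C * X + X * Cᵀ) := by abel
    rw [h, add_zero] at this
    exact this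
  have h2 : X * (Cᵀ * Cᵀ) = C * (C * X) := by
    rw [← mul_assoc, h1, neg_mul, mul_assoc, h1, mul_neg, neg_neg]
  -- transposed factors
  have hF2T : (Cᵀ*Cᵀ - (D/M) • Cᵀ + ((n:ℝ)*B/M) • 1)
      = (C*C - (D/M) • C + ((n:ℝ)*B/M) • 1)ᵀ := by
    rw [Matrix.transpose_add, Matrix.transpose_sub, Matrix.transpose_mul,
      Matrix.transpose_smul, Matrix.transpose_smul, Matrix.transpose_one]
  have hF1T : ((D/M) • (1 : Matrix (Fin (n-1) ⊕ Fin n) (Fin (n-1) ⊕ Fin n) ℝ) - Cᵀ)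
      = ((D/M) • 1 - C)ᵀ := by
    rw [Matrix.transpose_sub, Matrix.transpose_smul, Matrix.transpose_one]
  -- the key computation
  have e1 : X * (Cᵀ*Cᵀ - (D/M) • Cᵀ + ((n:ℝ)*B/M) • 1)
      = (C*C + (D/M) • C + ((n:ℝ)*B/M) • 1) * X := by
    rw [mul_add, mul_sub, Matrix.mul_smul, Matrix.mul_smul, mul_one, h1, h2,
      add_mul, add_mul, Matrix.smul_mul, Matrix.smul_mul, one_mul]
    simp only [smul_neg, sub_neg_eq_add, mul_assoc]
  have e2 : ((C*C + (D/M) • C + ((n:ℝ)*B/M) • 1) * X) * ((D/M) • 1 - Cᵀ) = 0 := by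
    set N := C*C + (D/M) • C + ((n:ℝ)*B/M) • 1 with hNdef
    have t1 : (N * X) * ((D/M) • 1) = (D/M) • (N * X) := by
      rw [Matrix.mul_smul, mul_one]
    have t2 : (N * X) * Cᵀ = -(N * (C * X)) := by rw [mul_assoc, h1, mul_neg]
    rw [mul_sub, t1, t2, sub_neg_eq_add,
      show (D/M) • (N*X) = ((D/M) • N) * X from (Matrix.smul_mul _ _ _).symm,
      show N * (C*X) = (N*C) * X from (mul_assoc _ _ _).symm, ← add_mul,
      show (D/M) • N + N * C = N * (C + (D/M) • 1) from by
        rw [mul_add, Matrix.mul_smul, mul_one, add_comm],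
      hCH, Matrix.zero_mul]
  have key : (X * (C*C - (D/M) • C + ((n:ℝ)*B/M) • 1)ᵀ) * ((D/M) • 1 - C)ᵀ = 0 := by
    rw [← hF2T, ← hF1T, e1, e2]
  -- invert the two factors
  have hE1' : ((D/M) • 1 - C)ᵀ * E1ᵀ = 1 := by
    rw [← Matrix.transpose_mul, mul_eq_one_comm.mp hE1, Matrix.transpose_one]
  have hE2' : (C*C - (D/M) • C + ((n:ℝ)*B/M) • 1)ᵀ * E2ᵀ = 1 := by
    rw [← Matrix.transpose_mul, mul_eq_one_comm.mp hE2, Matrix.transpose_one]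
  have s1 : X * (C*C - (D/M) • C + ((n:ℝ)*B/M) • 1)ᵀ = 0 := by
    calc X * (C*C - (D/M) • C + ((n:ℝ)*B/M) • 1)ᵀ
        = (X * (C*C - (D/M) • C + ((n:ℝ)*B/M) • 1)ᵀ) * (((D/M) • 1 - C)ᵀ * E1ᵀ) := by
          rw [hE1', mul_one]
    _ = ((X * (C*C - (D/M) • C + ((n:ℝ)*B/M) • 1)ᵀ) * ((D/M) • 1 - C)ᵀ) * E1ᵀ :=
          (mul_assoc _ _ _).symm
    _ = 0 := by rw [key, Matrix.zero_mul]
  calc X = X * ((C*C - (D/M) • C + ((n:ℝ)*B/M) • 1)ᵀ * E2ᵀ) := by rw [hE2', mul_one]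
  _ = (X * (C*C - (D/M) • C + ((n:ℝ)*B/M) • 1)ᵀ) * E2ᵀ := (mul_assoc _ _ _).symm
  _ = 0 := by rw [s1, Matrix.zero_mul]


/-- Any real solution W of the Lyapunov equation A·W + W·Aᵀ = −B_in·B_inᵀ equals W_C:
W_C is the unique solution, hence the controllability gramian of the pair (A, B_in). -/
theorem lyapunov_unique_solution (n : ℕ) (hn : 2 ≤ n) (M D B : ℝ)
    (hM : 0 < M) (hD : 0 < D) (hB : 0 < B)
    (W : Matrix (Fin (n - 1) ⊕ Fin n) (Fin (n - 1) ⊕ Fin n) ℝ)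
    (hW : Amat n M D B * W + W * (Amat n M D B)ᵀ = -(Bin n M * (Bin n M)ᵀ)) :
    W = WC n M D B := by
  have hsol := WC_solves n hn M D B (ne_of_gt hM) (ne_of_gt hD) (ne_of_gt hB)
  have hX : Amat n M D B * (W - WC n M D B)
      + (W - WC n M D B) * (Amat n M D B)ᵀ = 0 := by
    rw [mul_sub, sub_mul]
    calc Amat n M D B * W - Amat n M D B * WC n M D B
        + (W * (Amat n M D B)ᵀ - WC n M D B * (Amat n M D B)ᵀ)
        = (Amat n M D B * W + W * (Amat n M D B)ᵀ)
          - (Amat n M D B * WC n M D B + WC n M D B * (Amat n M D B)ᵀ) := by abel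
    _ = -(Bin n M * (Bin n M)ᵀ) - -(Bin n M * (Bin n M)ᵀ) := by rw [hW, hsol]
    _ = 0 := sub_self _
  have := homogeneous_zero n hn M D B hM hD hB (W - WC n M D B) hX
  exact sub_eq_zero.mp this

end Aux
end
end

section
/- If X is any real (n−1)×(n−1) matrix satisfying A₁₂·((1/(2MD))·I_n) + X·A₂₁ᵀ = 0, then X = (1/(2nBD))·(J_{n−1} + I_{n−1}); that is, the angle block of the controllability gramian is uniquely determined by the off-diagonal block equation of the Lyapunov system. -/
open Matrix

noncomputable section

/-- Any real (n−1)×(n−1) matrix X satisfying the off-diagonal block equation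
A₁₂·((1/(2MD))·I) + X·A₂₁ᵀ = 0 of the Lyapunov system equals (1/(2nBD))·(J + I):
the angle block of the controllability gramian is uniquely determined. -/
theorem angle_block_unique (n : ℕ) (hn : 2 ≤ n) (M D B : ℝ)
    (hM : 0 < M) (hD : 0 < D) (hB : 0 < B)
    (X : Matrix (Fin (n - 1)) (Fin (n - 1)) ℝ)
    (hX : A12 n * ((1 / (2 * M * D)) • (1 : Matrix (Fin n) (Fin n) ℝ)) +
        X * (A21 n M B)ᵀ = 0) :
    X = (1 / (2 * n * B * D)) • (Matrix.of (fun _ _ => (1 : ℝ)) + 1) := by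
  have hM' : M ≠ 0 := hM.ne'
  have hD' : D ≠ 0 := hD.ne'
  have hB' : B ≠ 0 := hB.ne'
  have hn' : (n : ℝ) ≠ 0 := by positivity
  rw [Matrix.mul_smul, Matrix.mul_one] at hX
  ext i j
  have H : ∀ j' : Fin n,
      (1 / (2 * M * D)) * A12 n i j' + ∑ k, X i k * A21 n M B j' k = 0 := by
    intro j'
    have := congrFun (congrFun hX i) j'
    simpa [Matrix.add_apply, Matrix.mul_apply, Matrix.transpose_apply,
      Matrix.smul_apply, smul_eq_mul] using this
  -- the last column
  have hlt : n - 1 < n := by omega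
  set last : Fin n := ⟨n - 1, hlt⟩ with hlast
  have h1 := H last
  have e1 : ∀ k : Fin (n - 1), A21 n M B last k = B / M := by
    intro k
    have := k.isLt
    simp only [A21, Matrix.of_apply, hlast]
    rw [if_neg]
    omega
  have eA12last : A12 n i last = -1 := by
    simp [A12, hlast]
  rw [eA12last] at h1
  simp only [e1] at h1
  rw [← Finset.sum_mul] at h1
  -- column j embedded in Fin n
  have hjlt : (j : ℕ) < n := by have := j.isLt; omega
  set j' : Fin n := ⟨(j : ℕ), hjlt⟩ with hj'
  have h2 := H j'
  have eA12j : A12 n i j' = if (i : ℕ) = (j : ℕ) then 1 else 0 := by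
    have := j.isLt
    simp only [A12, Matrix.of_apply, hj']
    rw [if_neg]
    omega
  have e2 : ∀ k : Fin (n - 1),
      A21 n M B j' k = B / M + (if j = k then -(n : ℝ) * B / M else 0) := by
    intro k
    simp only [A21, Matrix.of_apply, hj']
    by_cases h : j = k
    · subst h
      simp only [if_pos rfl, ↓reduceIte]
      field_simp
      ring
    · rw [if_neg, if_neg h]
      · ring
      · exact fun hc => h (Fin.ext hc)
  rw [eA12j] at h2
  simp only [e2, mul_add, Finset.sum_add_distrib] at h2
  rw [← Finset.sum_mul] at h2
  have e3 : (∑ k, X i k * if j = k then -(n : ℝ) * B / M else 0)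
      = X i j * (-(n : ℝ) * B / M) := by
    simp [mul_ite]
  rw [e3] at h2
  have hS : (∑ k, X i k) * (B / M) = 1 / (2 * M * D) := by linarith
  rw [hS] at h2
  simp only [Matrix.smul_apply, Matrix.add_apply, Matrix.of_apply, Matrix.one_apply,
    smul_eq_mul]
  by_cases hij : i = j
  · subst hij
    simp only [if_pos rfl] at h2 ⊢
    field_simp at h2 ⊢
    nlinarith [h2]
  · rw [if_neg (fun hc => hij (Fin.ext hc))] at h2
    rw [if_neg hij]
    field_simp at h2 ⊢
    nlinarith [h2]
end
end

section
/- If X is any real (n−1)×(n−1) matrix satisfying A₁₂·((1/(2MD))·I_n) + X·A₂₁ᵀ = 0, then every column of X sums to 1/(2BD); i.e., the sum of the columns of X equals (1/(2BD))·𝟙_{(n−1)×1}. -/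
open Matrix

noncomputable section

/-- If X satisfies the off-diagonal block equation A₁₂·((1/(2MD))·I) + X·A₂₁ᵀ = 0 of
the Lyapunov system, then every column of X sums to 1/(2BD). -/
theorem angle_block_column_sums (n : ℕ) (hn : 2 ≤ n) (M D B : ℝ)
    (hM : 0 < M) (hD : 0 < D) (hB : 0 < B)
    (X : Matrix (Fin (n - 1)) (Fin (n - 1)) ℝ)
    (hX : A12 n * ((1 / (2 * M * D)) • (1 : Matrix (Fin n) (Fin n) ℝ)) +
        X * (A21 n M B)ᵀ = 0) :
    ∀ j : Fin (n - 1), (∑ i : Fin (n - 1), X i j) = 1 / (2 * B * D) := by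
  intro j
  have hM' : M ≠ 0 := hM.ne'
  have hD' : D ≠ 0 := hD.ne'
  have hB' : B ≠ 0 := hB.ne'
  have hn0 : (n:ℝ) ≠ 0 := by positivity
  rw [Matrix.mul_smul, Matrix.mul_one] at hX
  have key : ∀ (i : Fin (n-1)) (p : Fin n),
      (1/(2*M*D)) * A12 n i p + ∑ k, X i k * A21 n M B p k = 0 := by
    intro i p
    have h := congrFun (congrFun hX i) p
    simpa [Matrix.add_apply, Matrix.mul_apply, Matrix.transpose_apply,
      Matrix.smul_apply, Matrix.zero_apply, smul_eq_mul] using h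
  -- row sums
  have S : ∀ i : Fin (n-1), ∑ k, X i k = 1/(2*B*D) := by
    intro i
    have h := key i ⟨n-1, by omega⟩
    have e1 : A12 n i ⟨n-1, by omega⟩ = -1 := by
      simp [A12]
    have e2 : ∀ k : Fin (n-1), A21 n M B ⟨n-1, by omega⟩ k = B / M := by
      intro k
      have hk := k.isLt
      simp only [A21, Matrix.of_apply]
      rw [if_neg (by omega)]
    rw [e1] at h
    simp only [e2] at h
    rw [← Finset.sum_mul] at h
    field_simp at h ⊢
    have h2 : (2 * D * ∑ k, X i k) * B * M = 1 * M := by linear_combination M * h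
    exact mul_right_cancel₀ hM' h2
  have hj := j.isLt
  set p : Fin n := ⟨j, by omega⟩ with hp
  have e1 : ∀ i : Fin (n-1), A12 n i p = if (i:ℕ) = (j:ℕ) then 1 else 0 := by
    intro i
    simp only [A12, Matrix.of_apply, hp]
    rw [if_neg (by omega)]
  have e2 : ∀ k : Fin (n-1),
      A21 n M B p k = B/M - (if j = k then (n:ℝ)*B/M else 0) := by
    intro k
    simp only [A21, Matrix.of_apply, hp]
    by_cases hjk : j = k
    · subst hjk
      rw [if_pos rfl, if_pos rfl]
      ring
    · rw [if_neg (fun h => hjk (Fin.val_injective h)), if_neg hjk, sub_zero]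
  have h : ∑ i : Fin (n-1), ((1/(2*M*D)) * A12 n i p + ∑ k, X i k * A21 n M B p k) = 0 :=
    Finset.sum_eq_zero fun i _ => key i p
  simp only [e1, e2] at h
  rw [Finset.sum_add_distrib] at h
  have hA : ∑ i : Fin (n-1), (1/(2*M*D)) * (if (i:ℕ) = (j:ℕ) then (1:ℝ) else 0)
      = 1/(2*M*D) := by
    simp [Fin.val_eq_val]
  rw [hA] at h
  have hrow : ∀ x : Fin (n-1), ∑ k, X x k * (B/M - if j = k then (n:ℝ)*B/M else 0)
      = (1/(2*B*D)) * (B/M) - X x j * ((n:ℝ)*B/M) := by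
    intro x
    simp only [mul_sub, Finset.sum_sub_distrib, ← Finset.sum_mul, S x, mul_ite, mul_zero]
    congr 1
    rw [Finset.sum_ite_eq]
    simp
  simp only [hrow] at h
  rw [Finset.sum_sub_distrib, Finset.sum_const, ← Finset.sum_mul, Finset.card_univ,
    Fintype.card_fin] at h
  have hcast : ((n - 1 : ℕ) : ℝ) = (n:ℝ) - 1 := by
    have : 1 ≤ n := by omega
    push_cast [Nat.cast_sub this]
    ring
  rw [nsmul_eq_mul, hcast] at h
  field_simp at h ⊢
  have hnpos : (0:ℝ) < (n:ℝ) := by exact_mod_cast (show 0 < n by omega)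
  have hc : (2*(n:ℝ)*B*D*M*M) ≠ 0 := by positivity
  have h3 : (2 * D * B * ∑ i : Fin (n-1), X i j) * (2*(n:ℝ)*B*D*M*M)
      = 1 * (2*(n:ℝ)*B*D*M*M) := by linear_combination (-2*B*D*M*M) * h
  exact mul_right_cancel₀ hc h3
end
end

section
/- The squared H₂-norm of the local transfer function f satisfies (1/(2π))·∫_{−∞}^{∞} |f(iω)|² dω = (6D² + 5BM)/(12D³M + 18BDM²). -/
open MeasureTheory Set Filter Real Complex Topology

noncomputable section

namespace H2aux

/-- numerator polynomial value as a complex number -/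
def W (a b c ω : ℝ) : ℂ := ((c - a * ω ^ 2 : ℝ) : ℂ) + ((b * ω : ℝ) : ℂ) * Complex.I

variable {a b c : ℝ}

lemma W_re (ω : ℝ) : (W a b c ω).re = c - a * ω ^ 2 := by
  simp only [W, Complex.add_re, Complex.ofReal_re, Complex.mul_re, Complex.I_re,
    Complex.I_im, Complex.ofReal_im]
  ring

lemma W_im (ω : ℝ) : (W a b c ω).im = b * ω := by
  simp only [W, Complex.add_im, Complex.ofReal_im, Complex.mul_im, Complex.I_re,
    Complex.I_im, Complex.ofReal_re]
  ring

lemma W_eq : W a b c = fun ω : ℝ => ((c : ℂ) - a * ω ^ 2 + b * ω * Complex.I) := by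
  funext x; simp only [W]; push_cast; ring

lemma q_pos (ha : 0 < a) (hb : 0 < b) (hc : 0 < c) (ω : ℝ) :
    0 < (c - a * ω ^ 2) ^ 2 + b ^ 2 * ω ^ 2 := by
  rcases eq_or_ne ω 0 with rfl | hω
  · simpa using pow_pos hc 2
  · have : 0 < b ^ 2 * ω ^ 2 := by positivity
    nlinarith [sq_nonneg (c - a * ω ^ 2)]

lemma W_mem_slit (ha : 0 < a) (hb : 0 < b) (hc : 0 < c) (ω : ℝ) :
    W a b c ω ∈ Complex.slitPlane := by
  rw [Complex.mem_slitPlane_iff, W_re, W_im]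
  rcases eq_or_ne ω 0 with rfl | hω
  · left; simpa using hc
  · right; exact mul_ne_zero hb.ne' hω

lemma normSq_W (ω : ℝ) :
    Complex.normSq (W a b c ω) = (c - a * ω ^ 2) ^ 2 + b ^ 2 * ω ^ 2 := by
  rw [Complex.normSq_apply, W_re, W_im]; ring

lemma hasDerivAt_W (ω : ℝ) :
    HasDerivAt (W a b c) (((-(a * (2 * ω)) : ℝ) : ℂ) + ((b : ℝ) : ℂ) * Complex.I) ω := by
  have h1 : HasDerivAt (fun ω : ℝ => c - a * ω ^ 2) (-(a * (2 * ω ^ 1))) ω :=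
    ((hasDerivAt_pow 2 ω).const_mul a).const_sub c
  have h2 : HasDerivAt (fun ω : ℝ => b * ω) b ω := by
    simpa using (hasDerivAt_id ω).const_mul b
  have := (h1.ofReal_comp).add ((h2.ofReal_comp).mul_const Complex.I)
  rw [W_eq]
  refine (this.congr_deriv (by push_cast; ring)).congr_of_eventuallyEq
    (Filter.Eventually.of_forall fun x => ?_)
  simp only [Pi.add_apply]; push_cast; ring

lemma hasDerivAt_G (ha : 0 < a) (hb : 0 < b) (hc : 0 < c) (ω : ℝ) :
    HasDerivAt (fun ω : ℝ => b⁻¹ * (Complex.log (W a b c ω)).im)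
      ((a * ω ^ 2 + c) / ((c - a * ω ^ 2) ^ 2 + b ^ 2 * ω ^ 2)) ω := by
  have hlog := (hasDerivAt_W (a := a) (b := b) (c := c) ω).clog_real (W_mem_slit ha hb hc ω)
  have him : HasDerivAt (fun ω : ℝ => (Complex.log (W a b c ω)).im)
      (((((-(a * (2 * ω)) : ℝ) : ℂ) + ((b : ℝ) : ℂ) * Complex.I) / W a b c ω).im) ω := by
    exact (Complex.imCLM.hasFDerivAt.comp_hasDerivAt ω hlog)
  have := him.const_mul (b⁻¹)
  refine this.congr_deriv ?_
  have hq := (q_pos ha hb hc ω).ne'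
  rw [Complex.div_im, normSq_W]
  simp only [Complex.add_re, Complex.add_im, Complex.ofReal_re, Complex.ofReal_im,
    Complex.mul_re, Complex.mul_im, Complex.I_re, Complex.I_im, W_re, W_im]
  field_simp
  ring

end H2aux

namespace H2b
open H2aux

variable {a b c : ℝ}

lemma sq_big {ω : ℝ} (ha : 0 < a) (hc : 0 < c) (h1 : Real.sqrt (c / a) < ω) :
    c - a * ω ^ 2 < 0 := by
  have h0 : (0 : ℝ) ≤ c / a := by positivity
  have hs := Real.sq_sqrt h0
  have hn := Real.sqrt_nonneg (c / a)
  have : c / a < ω ^ 2 := by nlinarith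
  have := (div_lt_iff₀ ha).mp this
  nlinarith

lemma tendsto_ratio_top (ha : 0 < a) (hc : 0 < c) :
    Tendsto (fun ω : ℝ => b * ω / (c - a * ω ^ 2)) atTop (𝓝 0) := by
  have h1 : Tendsto (fun ω : ℝ => b * ω⁻¹) atTop (𝓝 (b * 0)) :=
    tendsto_inv_atTop_zero.const_mul b
  have h2 : Tendsto (fun ω : ℝ => c * (ω ^ 2)⁻¹ - a) atTop (𝓝 (c * 0 - a)) :=
    (((tendsto_pow_atTop two_ne_zero).inv_tendsto_atTop).const_mul c).sub_const a
  have hne : c * 0 - a ≠ 0 := by simpa using ha.ne'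
  have h3 := h1.div h2 hne
  have h4 : b * 0 / (c * 0 - a) = 0 := by simp
  rw [h4] at h3
  refine h3.congr' ?_
  filter_upwards [eventually_gt_atTop (Real.sqrt (c / a)), eventually_gt_atTop (0 : ℝ)]
    with ω h2 hω
  have hre : c - a * ω ^ 2 < 0 := sq_big ha hc h2
  have h5 : (ω : ℝ) ≠ 0 := hω.ne'
  have key : c * (ω ^ 2)⁻¹ - a = (c - a * ω ^ 2) * (ω ^ 2)⁻¹ := by
    field_simp
  have hne5 : c * (ω ^ 2)⁻¹ - a ≠ 0 := by
    rw [key]; exact mul_ne_zero hre.ne (by positivity)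
  simp only [Pi.div_apply]
  rw [div_eq_div_iff hne5 hre.ne]
  field_simp

lemma tendsto_ratio_bot (ha : 0 < a) (hc : 0 < c) :
    Tendsto (fun ω : ℝ => b * ω / (c - a * ω ^ 2)) atBot (𝓝 0) := by
  have h := (tendsto_ratio_top (b := b) (c := c) ha hc).comp tendsto_neg_atBot_atTop
  have h2 : Tendsto (fun ω : ℝ => -(b * ω / (c - a * ω ^ 2))) atBot (𝓝 0) := by
    refine h.congr fun ω => ?_
    simp only [Function.comp]
    ring
  simpa using h2.neg

lemma tendsto_t_top (ha : 0 < a) (hb : 0 < b) (hc : 0 < c) :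
    Tendsto (fun ω : ℝ => (-(W a b c ω)).im / ‖W a b c ω‖) atTop (𝓝 0) := by
  have habs : Tendsto (fun ω : ℝ => |b * ω / (c - a * ω ^ 2)|) atTop (𝓝 0) := by
    simpa using (tendsto_ratio_top (b := b) (c := c) ha hc).abs
  refine squeeze_zero_norm' ?_ habs
  filter_upwards [eventually_gt_atTop (Real.sqrt (c / a))] with ω h2
  have hre : c - a * ω ^ 2 < 0 := sq_big ha hc h2
  have hre' : |c - a * ω ^ 2| > 0 := abs_pos.mpr hre.ne
  have hle : |c - a * ω ^ 2| ≤ ‖W a b c ω‖ := by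
    have := Complex.abs_re_le_norm (W a b c ω)
    rwa [W_re] at this
  rw [Real.norm_eq_abs, abs_div, Complex.neg_im, W_im, abs_div, abs_neg]
  have hWpos : 0 < ‖W a b c ω‖ := lt_of_lt_of_le hre' hle
  rw [abs_of_pos hWpos]
  gcongr

lemma tendsto_t_bot (ha : 0 < a) (hb : 0 < b) (hc : 0 < c) :
    Tendsto (fun ω : ℝ => (-(W a b c ω)).im / ‖W a b c ω‖) atBot (𝓝 0) := by
  have habs : Tendsto (fun ω : ℝ => |b * ω / (c - a * ω ^ 2)|) atBot (𝓝 0) := by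
    simpa using (tendsto_ratio_bot (b := b) (c := c) ha hc).abs
  refine squeeze_zero_norm' ?_ habs
  filter_upwards [eventually_lt_atBot (-Real.sqrt (c / a))] with ω h2
  have h2' : Real.sqrt (c / a) < -ω := by linarith
  have hre : c - a * ω ^ 2 < 0 := by
    have := sq_big (ω := -ω) ha hc h2'
    nlinarith
  have hre' : |c - a * ω ^ 2| > 0 := abs_pos.mpr hre.ne
  have hle : |c - a * ω ^ 2| ≤ ‖W a b c ω‖ := by
    have := Complex.abs_re_le_norm (W a b c ω)
    rwa [W_re] at this
  rw [Real.norm_eq_abs, abs_div, Complex.neg_im, W_im, abs_div, abs_neg]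
  have hWpos : 0 < ‖W a b c ω‖ := lt_of_lt_of_le hre' hle
  rw [abs_of_pos hWpos]
  gcongr

lemma argW_top (ha : 0 < a) (hb : 0 < b) (hc : 0 < c) :
    Tendsto (fun ω : ℝ => Complex.arg (W a b c ω)) atTop (𝓝 π) := by
  have h1 : Tendsto (fun ω : ℝ =>
      Real.arcsin ((-(W a b c ω)).im / ‖W a b c ω‖) + π) atTop
      (𝓝 (Real.arcsin 0 + π)) :=
    ((Real.continuous_arcsin.tendsto 0).comp (tendsto_t_top ha hb hc)).add_const π
  rw [Real.arcsin_zero, zero_add] at h1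
  refine h1.congr' ?_
  filter_upwards [eventually_gt_atTop (Real.sqrt (c / a)), eventually_gt_atTop (0 : ℝ)]
    with ω h2 h3
  rw [Complex.arg_of_re_neg_of_im_nonneg (by rw [W_re]; exact sq_big ha hc h2)
    (by rw [W_im]; positivity)]

lemma argW_bot (ha : 0 < a) (hb : 0 < b) (hc : 0 < c) :
    Tendsto (fun ω : ℝ => Complex.arg (W a b c ω)) atBot (𝓝 (-π)) := by
  have h1 : Tendsto (fun ω : ℝ =>
      Real.arcsin ((-(W a b c ω)).im / ‖W a b c ω‖) - π) atBot
      (𝓝 (Real.arcsin 0 - π)) :=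
    ((Real.continuous_arcsin.tendsto 0).comp (tendsto_t_bot ha hb hc)).sub_const π
  rw [Real.arcsin_zero, zero_sub] at h1
  refine h1.congr' ?_
  filter_upwards [eventually_lt_atBot (-Real.sqrt (c / a)), eventually_lt_atBot (0 : ℝ)]
    with ω h2 h3
  have h2' : Real.sqrt (c / a) < -ω := by linarith
  have hre : c - a * ω ^ 2 < 0 := by
    have := sq_big (ω := -ω) ha hc h2'
    nlinarith
  rw [Complex.arg_of_re_neg_of_im_neg (by rw [W_re]; exact hre)
    (by rw [W_im]; exact mul_neg_of_pos_of_neg hb h3)]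

lemma G_top (ha : 0 < a) (hb : 0 < b) (hc : 0 < c) :
    Tendsto (fun ω : ℝ => b⁻¹ * (Complex.log (W a b c ω)).im) atTop (𝓝 (b⁻¹ * π)) := by
  simp only [Complex.log_im]
  exact (argW_top ha hb hc).const_mul b⁻¹

lemma G_bot (ha : 0 < a) (hb : 0 < b) (hc : 0 < c) :
    Tendsto (fun ω : ℝ => b⁻¹ * (Complex.log (W a b c ω)).im) atBot (𝓝 (b⁻¹ * -π)) := by
  simp only [Complex.log_im]
  exact (argW_bot ha hb hc).const_mul b⁻¹

lemma integrable_of_even (f : ℝ → ℝ) (hf : ∀ x, f (-x) = f x)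
    (h : IntegrableOn f (Ioi (0 : ℝ))) : Integrable f := by
  have int_Iic : IntegrableOn f (Iic (0 : ℝ)) := by
    rw [← Measure.map_neg_eq_self (volume : Measure ℝ)]
    have m : MeasurableEmbedding fun x : ℝ => -x :=
      (Homeomorph.neg ℝ).measurableEmbedding
    rw [m.integrableOn_map_iff]
    simp only [Function.comp_def, hf, neg_preimage, neg_Iic, neg_zero]
    exact (integrableOn_Ici_iff_integrableOn_Ioi).mpr h
  rw [← integrableOn_univ, ← Set.Iic_union_Ioi (a := (0 : ℝ))]
  exact int_Iic.union h

lemma integrableOn_g1_Ioi (ha : 0 < a) (hb : 0 < b) (hc : 0 < c) :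
    IntegrableOn (fun ω : ℝ => (a * ω ^ 2 + c) / ((c - a * ω ^ 2) ^ 2 + b ^ 2 * ω ^ 2))
      (Ioi (0 : ℝ)) := by
  refine integrableOn_Ioi_deriv_of_nonneg' (g := fun ω => b⁻¹ * (Complex.log (W a b c ω)).im)
    (fun x _ => hasDerivAt_G ha hb hc x) (fun x _ => ?_) (G_top ha hb hc)
  have := q_pos ha hb hc x
  positivity

lemma integrable_g1 (ha : 0 < a) (hb : 0 < b) (hc : 0 < c) :
    Integrable (fun ω : ℝ => (a * ω ^ 2 + c) / ((c - a * ω ^ 2) ^ 2 + b ^ 2 * ω ^ 2)) := by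
  refine integrable_of_even _ (fun x => by ring_nf) (integrableOn_g1_Ioi ha hb hc)

lemma integral_g1 (ha : 0 < a) (hb : 0 < b) (hc : 0 < c) :
    ∫ ω : ℝ, (a * ω ^ 2 + c) / ((c - a * ω ^ 2) ^ 2 + b ^ 2 * ω ^ 2) = 2 * π / b := by
  have := integral_of_hasDerivAt_of_tendsto (fun x => hasDerivAt_G ha hb hc x)
    (integrable_g1 ha hb hc) (G_bot ha hb hc) (G_top ha hb hc)
  rw [this]
  field_simp
  ring

lemma continuous_g2 (ha : 0 < a) (hb : 0 < b) (hc : 0 < c) :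
    Continuous (fun ω : ℝ => (a * ω ^ 2 - c) / ((c - a * ω ^ 2) ^ 2 + b ^ 2 * ω ^ 2)) := by
  refine Continuous.div (by continuity) (by continuity) fun x => (q_pos ha hb hc x).ne'

lemma integrable_g2 (ha : 0 < a) (hb : 0 < b) (hc : 0 < c) :
    Integrable (fun ω : ℝ => (a * ω ^ 2 - c) / ((c - a * ω ^ 2) ^ 2 + b ^ 2 * ω ^ 2)) := by
  refine (integrable_g1 ha hb hc).mono' (continuous_g2 ha hb hc).aestronglyMeasurable
    (ae_of_all _ fun x => ?_)
  have hq := q_pos ha hb hc x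
  rw [Real.norm_eq_abs, abs_div, abs_of_pos hq]
  gcongr
  rw [abs_le]
  constructor <;> nlinarith [sq_nonneg x]

lemma image_inv_Ioi {k : ℝ} (hk : 0 < k) :
    (fun x : ℝ => k / x) '' Ioi (0 : ℝ) = Ioi (0 : ℝ) := by
  ext y
  constructor
  · rintro ⟨x, hx, rfl⟩
    exact div_pos hk hx
  · intro hy
    exact ⟨k / y, div_pos hk hy, by field_simp⟩

lemma integral_g2_Ioi (ha : 0 < a) (hb : 0 < b) (hc : 0 < c) :
    ∫ ω in Ioi (0 : ℝ), (a * ω ^ 2 - c) / ((c - a * ω ^ 2) ^ 2 + b ^ 2 * ω ^ 2) = 0 := by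
  set k : ℝ := c / a with hk
  have hkpos : 0 < k := div_pos hc ha
  set g : ℝ → ℝ := fun ω => (a * ω ^ 2 - c) / ((c - a * ω ^ 2) ^ 2 + b ^ 2 * ω ^ 2) with hg
  have hderiv : ∀ x ∈ Ioi (0 : ℝ), HasDerivWithinAt (fun x : ℝ => k / x)
      (k * -((x ^ 2)⁻¹)) (Ioi (0 : ℝ)) x := by
    intro x hx
    have : HasDerivAt (fun x : ℝ => k * x⁻¹) (k * -((x ^ 2)⁻¹)) x :=
      (hasDerivAt_inv (ne_of_gt hx)).const_mul k
    refine (this.congr_of_eventuallyEq ?_).hasDerivWithinAt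
    filter_upwards with y using by rw [div_eq_mul_inv]
  have hinj : InjOn (fun x : ℝ => k / x) (Ioi (0 : ℝ)) := by
    intro x hx y hy hxy
    have hx0 : (0 : ℝ) < x := hx
    have hy0 : (0 : ℝ) < y := hy
    simp only at hxy
    rw [div_eq_div_iff hx0.ne' hy0.ne'] at hxy
    exact (mul_left_cancel₀ hkpos.ne' hxy).symm
  have hsub := integral_image_eq_integral_abs_deriv_smul measurableSet_Ioi hderiv hinj g
  rw [image_inv_Ioi hkpos] at hsub
  have hcong : ∀ x ∈ Ioi (0 : ℝ), |k * -((x ^ 2)⁻¹)| • g (k / x) = -g x := by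
    intro x hx
    have hx0 : (0 : ℝ) < x := hx
    have hq := q_pos ha hb hc x
    have hneg : k * -((x ^ 2)⁻¹) ≤ 0 := by
      have hxx : (0 : ℝ) < (x ^ 2)⁻¹ := by positivity
      nlinarith
    have e1 : (c - a * (k / x) ^ 2) ^ 2 + b ^ 2 * (k / x) ^ 2
        = (c ^ 2 / (a ^ 2 * x ^ 4)) * ((c - a * x ^ 2) ^ 2 + b ^ 2 * x ^ 2) := by
      rw [hk]; field_simp; ring
    have e2 : a * (k / x) ^ 2 - c = -(c / (a * x ^ 2)) * (a * x ^ 2 - c) := by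
      rw [hk]; field_simp; ring
    rw [abs_of_nonpos hneg]
    simp only [hg, smul_eq_mul]
    rw [e1, e2]
    rw [hk]
    field_simp
  rw [setIntegral_congr_fun measurableSet_Ioi hcong] at hsub
  rw [integral_neg] at hsub
  linarith

lemma integral_g2 (ha : 0 < a) (hb : 0 < b) (hc : 0 < c) :
    ∫ ω : ℝ, (a * ω ^ 2 - c) / ((c - a * ω ^ 2) ^ 2 + b ^ 2 * ω ^ 2) = 0 := by
  have hint := integrable_g2 ha hb hc
  have hsplit := intervalIntegral.integral_Iic_add_Ioi (b := (0 : ℝ))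
    hint.integrableOn hint.integrableOn
  rw [← hsplit]
  have hIic : (∫ ω in Iic (0 : ℝ),
      (a * ω ^ 2 - c) / ((c - a * ω ^ 2) ^ 2 + b ^ 2 * ω ^ 2))
      = ∫ ω in Ioi (0 : ℝ), (a * ω ^ 2 - c) / ((c - a * ω ^ 2) ^ 2 + b ^ 2 * ω ^ 2) := by
    have hcn := integral_comp_neg_Iic (0 : ℝ)
      (fun ω : ℝ => (a * ω ^ 2 - c) / ((c - a * ω ^ 2) ^ 2 + b ^ 2 * ω ^ 2))
    rw [neg_zero] at hcn
    rw [← hcn]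
    refine setIntegral_congr_fun measurableSet_Iic fun x _ => ?_
    ring_nf
  rw [hIic, integral_g2_Ioi ha hb hc]
  ring

lemma integrable_bound (f : ℝ → ℝ) (hf : Continuous f) (K : ℝ)
    (h : ∀ x, |f x| ≤ K * (1 + x ^ 2)⁻¹) : Integrable f := by
  refine (integrable_inv_one_add_sq.const_mul K).mono' hf.aestronglyMeasurable
    (ae_of_all _ fun x => ?_)
  rw [Real.norm_eq_abs]
  exact h x

lemma integrable_inv_L {M D : ℝ} (hM : 0 < M) (hD : 0 < D) :
    Integrable (fun ω : ℝ => (M ^ 2 * ω ^ 2 + D ^ 2)⁻¹) := by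
  refine integrable_bound _ (Continuous.inv₀ (by continuity) fun x => by positivity)
    ((M ^ 2)⁻¹ + (D ^ 2)⁻¹) fun x => ?_
  have h1 : (0 : ℝ) < M ^ 2 * x ^ 2 + D ^ 2 := by positivity
  have h2 : (0 : ℝ) < 1 + x ^ 2 := by positivity
  rw [abs_of_pos (by positivity), ← one_div, ← div_eq_mul_inv, div_le_div_iff₀ h1 h2]
  have hM2 : (0 : ℝ) < M ^ 2 := by positivity
  have hD2 : (0 : ℝ) < D ^ 2 := by positivity
  have e1 : (M ^ 2)⁻¹ * M ^ 2 = 1 := inv_mul_cancel₀ hM2.ne'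
  have e2 : (D ^ 2)⁻¹ * D ^ 2 = 1 := inv_mul_cancel₀ hD2.ne'
  nlinarith [mul_pos (inv_pos.mpr hM2) hD2, mul_pos (inv_pos.mpr hD2) hM2,
    mul_nonneg (mul_pos (inv_pos.mpr hD2) hM2).le (sq_nonneg x)]

lemma integral_inv_L {M D : ℝ} (hM : 0 < M) (hD : 0 < D) :
    ∫ ω : ℝ, (M ^ 2 * ω ^ 2 + D ^ 2)⁻¹ = π / (M * D) := by
  have hderiv : ∀ ω : ℝ, HasDerivAt (fun ω : ℝ => (M * D)⁻¹ * Real.arctan (M / D * ω))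
      ((M ^ 2 * ω ^ 2 + D ^ 2)⁻¹) ω := by
    intro ω
    have h1 : HasDerivAt (fun ω : ℝ => M / D * ω) (M / D) ω := by
      simpa using (hasDerivAt_id ω).const_mul (M / D)
    have h2 := (Real.hasDerivAt_arctan (M / D * ω)).comp ω h1
    have h3 := h2.const_mul ((M * D)⁻¹)
    refine h3.congr_deriv ?_
    field_simp
    ring
  have htop : Tendsto (fun ω : ℝ => (M * D)⁻¹ * Real.arctan (M / D * ω)) atTop
      (𝓝 ((M * D)⁻¹ * (π / 2))) := by
    have h1 : Tendsto (fun ω : ℝ => M / D * ω) atTop atTop :=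
      Tendsto.const_mul_atTop (by positivity) tendsto_id
    exact ((tendsto_nhds_of_tendsto_nhdsWithin Real.tendsto_arctan_atTop).comp h1).const_mul _
  have hbot : Tendsto (fun ω : ℝ => (M * D)⁻¹ * Real.arctan (M / D * ω)) atBot
      (𝓝 ((M * D)⁻¹ * (-(π / 2)))) := by
    have h1 : Tendsto (fun ω : ℝ => M / D * ω) atBot atBot :=
      Tendsto.const_mul_atBot (by positivity) tendsto_id
    exact ((tendsto_nhds_of_tendsto_nhdsWithin Real.tendsto_arctan_atBot).comp h1).const_mul _
  have := integral_of_hasDerivAt_of_tendsto hderiv (integrable_inv_L hM hD) hbot htop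
  rw [this]
  field_simp
  ring

end H2b

/-- The local (diagonal) transfer function of the symmetric three-GFM triangle
network, from a power disturbance at a GFM's own bus to that GFM's frequency. -/
def fLocal (M D B : ℝ) (s : ℂ) : ℂ :=
  ((M : ℂ) * s ^ 2 + D * s + B) /
    (((M : ℂ) * s ^ 2 + D * s + 3 * B) * ((M : ℂ) * s + D))

namespace H2c
open H2aux H2b

lemma abs_sq (M D B ω : ℝ) :
    ‖fLocal M D B (ω * Complex.I)‖ ^ 2 =
      ((B - M * ω ^ 2) ^ 2 + D ^ 2 * ω ^ 2) /
        (((3 * B - M * ω ^ 2) ^ 2 + D ^ 2 * ω ^ 2) * (M ^ 2 * ω ^ 2 + D ^ 2)) := by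
  have hI : ((ω : ℂ) * Complex.I) ^ 2 = -((ω : ℂ) ^ 2) := by
    rw [mul_pow, Complex.I_sq]; ring
  have e1 : (M : ℂ) * ((ω : ℂ) * Complex.I) ^ 2 + D * ((ω : ℂ) * Complex.I) + B
      = ((B - M * ω ^ 2 : ℝ) : ℂ) + ((D * ω : ℝ) : ℂ) * Complex.I := by
    rw [hI]; push_cast; ring
  have e2 : (M : ℂ) * ((ω : ℂ) * Complex.I) ^ 2 + D * ((ω : ℂ) * Complex.I) + 3 * B
      = ((3 * B - M * ω ^ 2 : ℝ) : ℂ) + ((D * ω : ℝ) : ℂ) * Complex.I := by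
    rw [hI]; push_cast; ring
  have e3 : (M : ℂ) * ((ω : ℂ) * Complex.I) + D
      = ((D : ℝ) : ℂ) + ((M * ω : ℝ) : ℂ) * Complex.I := by
    push_cast; ring
  rw [fLocal, e1, e2, e3, norm_div, norm_mul, div_pow, mul_pow,
    Complex.sq_norm, Complex.sq_norm, Complex.sq_norm,
    Complex.normSq_add_mul_I, Complex.normSq_add_mul_I, Complex.normSq_add_mul_I]
  ring_nf

end H2c

/-- The squared H₂-norm of the local transfer function equals
(6D² + 5BM)/(12D³M + 18BDM²). -/
theorem local_H2_norm_sq (M D B : ℝ) (hM : 0 < M) (hD : 0 < D) (hB : 0 < B) :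
    (1 / (2 * Real.pi)) * (∫ ω : ℝ, ‖fLocal M D B (ω * Complex.I)‖ ^ 2) =
      (6 * D ^ 2 + 5 * B * M) / (12 * D ^ 3 * M + 18 * B * D * M ^ 2) := by
  have h3B : (0 : ℝ) < 3 * B := by linarith
  have hS : (0 : ℝ) < 2 * D ^ 2 + 3 * B * M := by positivity
  have key : ∀ ω : ℝ, ‖fLocal M D B (ω * Complex.I)‖ ^ 2
      = (2 * D ^ 2 + B * M) / (3 * (2 * D ^ 2 + 3 * B * M)) * (M ^ 2 * ω ^ 2 + D ^ 2)⁻¹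
        + (2 * (D ^ 2 + B * M) / (3 * M * (2 * D ^ 2 + 3 * B * M))
            * ((M * ω ^ 2 + 3 * B) / ((3 * B - M * ω ^ 2) ^ 2 + D ^ 2 * ω ^ 2))
          + 2 * (D ^ 2 + 3 * B * M) / (3 * M * (2 * D ^ 2 + 3 * B * M))
            * ((M * ω ^ 2 - 3 * B) / ((3 * B - M * ω ^ 2) ^ 2 + D ^ 2 * ω ^ 2))) := by
    intro ω
    rw [H2c.abs_sq M D B ω]
    have hq := H2aux.q_pos hM hD h3B ω
    have hL : (0 : ℝ) < M ^ 2 * ω ^ 2 + D ^ 2 := by positivity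
    have hq' := hq.ne'
    have hL' := hL.ne'
    generalize hQ : (3 * B - M * ω ^ 2) ^ 2 + D ^ 2 * ω ^ 2 = Q at hq' ⊢
    field_simp
    rw [← hQ]
    ring
  have hint1 : Integrable (fun ω : ℝ =>
      (2 * D ^ 2 + B * M) / (3 * (2 * D ^ 2 + 3 * B * M)) * (M ^ 2 * ω ^ 2 + D ^ 2)⁻¹) :=
    (H2b.integrable_inv_L hM hD).const_mul _
  have hint2 : Integrable (fun ω : ℝ =>
      2 * (D ^ 2 + B * M) / (3 * M * (2 * D ^ 2 + 3 * B * M))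
        * ((M * ω ^ 2 + 3 * B) / ((3 * B - M * ω ^ 2) ^ 2 + D ^ 2 * ω ^ 2))) :=
    (H2b.integrable_g1 hM hD h3B).const_mul _
  have hint3 : Integrable (fun ω : ℝ =>
      2 * (D ^ 2 + 3 * B * M) / (3 * M * (2 * D ^ 2 + 3 * B * M))
        * ((M * ω ^ 2 - 3 * B) / ((3 * B - M * ω ^ 2) ^ 2 + D ^ 2 * ω ^ 2))) :=
    (H2b.integrable_g2 hM hD h3B).const_mul _
  have hint23 : Integrable (fun ω : ℝ =>
      2 * (D ^ 2 + B * M) / (3 * M * (2 * D ^ 2 + 3 * B * M))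
        * ((M * ω ^ 2 + 3 * B) / ((3 * B - M * ω ^ 2) ^ 2 + D ^ 2 * ω ^ 2))
      + 2 * (D ^ 2 + 3 * B * M) / (3 * M * (2 * D ^ 2 + 3 * B * M))
        * ((M * ω ^ 2 - 3 * B) / ((3 * B - M * ω ^ 2) ^ 2 + D ^ 2 * ω ^ 2))) :=
    hint2.add hint3
  rw [integral_congr_ae (Filter.Eventually.of_forall key)]
  rw [integral_add hint1 hint23, integral_add hint2 hint3,
    integral_const_mul, integral_const_mul, integral_const_mul,
    H2b.integral_inv_L hM hD, H2b.integral_g1 hM hD h3B, H2b.integral_g2 hM hD h3B]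
  have hπ := Real.pi_ne_zero
  field_simp
  ring
end
end

section
/- For fixed positive reals D and B, the function M ↦ (6D² + 5BM)/(12D³M + 18BDM²) is strictly decreasing on (0, ∞); that is, lowering the GFM effective inertia strictly increases the squared H₂-norm of the local disturbance response. -/
/-- For fixed positive damping D and admittance B, the squared H₂-norm of the local
disturbance response, M ↦ (6D² + 5BM)/(12D³M + 18BDM²), is strictly decreasing in
the GFM effective inertia M on (0, ∞): lowering the effective inertia strictly
increases the local responsiveness. -/
theorem local_H2_strictAnti (D B : ℝ) (hD : 0 < D) (hB : 0 < B) :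
    StrictAntiOn
      (fun M : ℝ => (6 * D ^ 2 + 5 * B * M) / (12 * D ^ 3 * M + 18 * B * D * M ^ 2))
      (Set.Ioi 0) := by
  intro x hx y hy hxy
  simp only [Set.mem_Ioi] at hx hy
  have hdx : 0 < 12 * D ^ 3 * x + 18 * B * D * x ^ 2 := by positivity
  have hdy : 0 < 12 * D ^ 3 * y + 18 * B * D * y ^ 2 := by positivity
  rw [div_lt_div_iff₀ hdy hdx]
  nlinarith [mul_pos hB (mul_pos hD (mul_pos hx hy)), sq_nonneg (y - x),
    mul_pos (mul_pos hB hB) (mul_pos hD (mul_pos hx hy)),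
    mul_pos (pow_pos hD 5) (sub_pos.mpr hxy),
    mul_pos (mul_pos (mul_pos hB (pow_pos hD 3)) (add_pos hx hy)) (sub_pos.mpr hxy),
    mul_pos (mul_pos (mul_pos (mul_pos hB hB) hD) (mul_pos hx hy)) (sub_pos.mpr hxy)]
end
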